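/- Fix ℓ ≥ 1 and ℓ-multicompositions ν and μ of n. The cardinality of the set BCM_ℓ(ν,μ) of flagged ℓ×ℓ block composition matrices with row sum ν and column sum μ equals the cardinality of the set BW_ℓ(ν,μ) of (ν,μ)-flagged biwords, and both equal the cardinality of ParMat♭_{ν,μ}. -/

import Mathlib

/-! Common definitions for a level-`ℓ` RSK correspondence.

* The alphabet `S = {a_b}` is encoded by `Letter := Lex (ℕ × ℕ)`, the letter `a_b`
  (with `a, b` now 0-indexed) being `toLex (b, a)`; the lexicographic order on the
  pairs `(b, a)` is exactly the order `1_1 < 2_1 < ⋯ < 1_2 < 2_2 < ⋯` of the paper.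
* Compositions are lists of naturals (0-indexed parts, part `t` is `l.getD t 0`);
  partitions are weakly decreasing lists of positive naturals.
* All block/row/column indices `p, q ∈ {1, …, ℓ}` and `i, j, t ≥ 1` of the paper are
  0-indexed here, so e.g. the constraint `length ≤ min(p,q) - 1` becomes
  `length ≤ min p q` for `p q : Fin ℓ`.
-/

/-- The alphabet `S`: the letter `a_b` is encoded as `toLex (b, a)`. -/
abbrev Letter : Type := Lex (ℕ × ℕ)

/-- The `t`-th row sum of a finitely supported matrix `ℕ × ℕ → ℕ`. -/
def rowSum (M : (ℕ × ℕ) →₀ ℕ) (t : ℕ) : ℕ :=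
  ∑ p ∈ M.support, if p.1 = t then M p else 0

/-- The `t`-th column sum of a finitely supported matrix `ℕ × ℕ → ℕ`. -/
def colSum (M : (ℕ × ℕ) →₀ ℕ) (t : ℕ) : ℕ :=
  ∑ p ∈ M.support, if p.2 = t then M p else 0

/-- `μ` is an `ℓ`-multicomposition of `n`. -/
def IsMultiComp (ℓ n : ℕ) (μ : Fin ℓ → List ℕ) : Prop :=
  ∑ i, (μ i).sum = n

/-- `l` is a partition: a weakly decreasing list of positive integers. -/
def IsPartitionList (l : List ℕ) : Prop :=
  List.Pairwise (· ≥ ·) l ∧ ∀ x ∈ l, 0 < x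

/-- `lam` is an `ℓ`-multipartition of `n`. -/
def IsMultiPartition (ℓ n : ℕ) (lam : Fin ℓ → List ℕ) : Prop :=
  (∀ i, IsPartitionList (lam i)) ∧ ∑ i, (lam i).sum = n

/-- The set `ParMat♭_{ν,μ}`: pairs `(A, P)` of an `ℓ × ℓ` block ℕ-matrix `A` with
`row(A) = ν`, `col(A) = μ`, and a family `P` of partitions `η^{(pq)}_{ij}` with largest part
at most `a^{(pq)}_{ij}` and at most `min(p,q) - 1` parts (`= min p q` in 0-indexed form). -/
def ParMat (ℓ : ℕ) (ν μ : Fin ℓ → List ℕ) :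
    Set ((Fin ℓ → Fin ℓ → ((ℕ × ℕ) →₀ ℕ)) × (Fin ℓ → Fin ℓ → ℕ → ℕ → List ℕ)) :=
  {AP | (∀ s t, ∑ q, rowSum (AP.1 s q) t = (ν s).getD t 0) ∧
        (∀ s t, ∑ p, colSum (AP.1 p s) t = (μ s).getD t 0) ∧
        (∀ p q i j, IsPartitionList (AP.2 p q i j)) ∧
        (∀ p q i j, ∀ x ∈ AP.2 p q i j, x ≤ AP.1 p q (i, j)) ∧
        (∀ p q i j, (AP.2 p q i j).length ≤ min (p : ℕ) (q : ℕ))}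

/-- The cells of the Ferrers diagram of a composition `l` (0-indexed):
`(i, j)` with `j < l_i`. -/
def cells (l : List ℕ) : Finset (ℕ × ℕ) :=
  (Finset.range l.length ×ˢ Finset.range (l.foldr max 0)).filter
    (fun p => p.2 < l.getD p.1 0)

/-- `T` is a semistandard tableau of shape `l`: rows weakly increase, columns strictly
increase, and (as a normalization pinning down the irrelevant values) `T` takes the
default value `d` outside the diagram. -/
def IsSSYT {α : Type*} [LinearOrder α] (l : List ℕ) (d : α) (T : ℕ → ℕ → α) : Prop :=
  (∀ i j, (i, j + 1) ∈ cells l → T i j ≤ T i (j + 1)) ∧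
  (∀ i j, (i + 1, j) ∈ cells l → T i j < T (i + 1) j) ∧
  (∀ i j, (i, j) ∉ cells l → T i j = d)

/-- The multiset of entries of a tableau of shape `l`. -/
def entries {α : Type*} (l : List ℕ) (T : ℕ → ℕ → α) : Multiset α :=
  (cells l).val.map (fun p => T p.1 p.2)

/-- The multiset in which `f a` occurs with multiplicity the `a`-th part of `c`. -/
def contentMultiset {α : Type*} (c : List ℕ) (f : ℕ → α) : Multiset α :=
  (Multiset.range c.length).bind (fun a => Multiset.replicate (c.getD a 0) (f a))

/-- The `μ`-alphabet `U_μ`: the letter `a_b` occurs with multiplicity `μ^{(b)}_a`. -/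
def alphabetMultiset (ℓ : ℕ) (μ : Fin ℓ → List ℕ) : Multiset Letter :=
  ∑ b : Fin ℓ, contentMultiset (μ b) (fun a => toLex ((b : ℕ), a))

/-- The set `SST_ℓ(lam, μ)` of semistandard multitableaux of shape `lam` and content `μ`:
`ℓ`-tuples of semistandard tableaux whose total entry multiset is `U_μ` and such that a
letter `a_b` occurs in the `i`-th tableau only if `b ≥ i` (the flagging condition). -/
def SSTset (ℓ : ℕ) (lam μ : Fin ℓ → List ℕ) : Set (Fin ℓ → ℕ → ℕ → Letter) :=
  {T | (∀ i, IsSSYT (lam i) (toLex (0, 0)) (T i)) ∧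
       (∑ i, entries (lam i) (T i)) = alphabetMultiset ℓ μ ∧
       (∀ i : Fin ℓ, ∀ p ∈ cells (lam i), (i : ℕ) ≤ (ofLex (T i p.1 p.2)).1)}

/-- A composition has no trailing zero parts. -/
def NoTrailingZero (c : List ℕ) : Prop := ∀ h : c ≠ [], c.getLast h ≠ 0

/-- The set `BCM_ℓ(ν, μ)` of flagged `ℓ × ℓ` block composition matrices with row sum `ν`
and column sum `μ`: the entry at `(p,q,i,j)` is a composition (no trailing zeros) with at
most `min(p,q)` parts (`= min p q + 1` in 0-indexed form). -/
def BCM (ℓ : ℕ) (ν μ : Fin ℓ → List ℕ) : Set (Fin ℓ → Fin ℓ → ℕ → ℕ → List ℕ) :=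
  {B | (∀ p q, {x : ℕ × ℕ | B p q x.1 x.2 ≠ []}.Finite) ∧
       (∀ p q i j, NoTrailingZero (B p q i j)) ∧
       (∀ p q i j, (B p q i j).length ≤ min (p : ℕ) (q : ℕ) + 1) ∧
       (∀ s t, (∑ q, ∑ᶠ j, (B s q t j).sum) = (ν s).getD t 0) ∧
       (∀ s t, (∑ p, ∑ᶠ i, (B p s i t).sum) = (μ s).getD t 0)}

/-- The set `BW_ℓ(ν, μ)` of `(ν,μ)`-flagged biwords.  A biword over `S` is determined by
the multiset of its biletters (columns), so we encode it as a multiset of pairs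
(top letter, bottom letter).  A letter `a_b` may appear in the `i`-th biword only if
`b ≥ i`; the top rows together form `U_ν` and the bottom rows form `U_μ`. -/
def BW (ℓ : ℕ) (ν μ : Fin ℓ → List ℕ) : Set (Fin ℓ → Multiset (Letter × Letter)) :=
  {w | (∀ i : Fin ℓ, ∀ x ∈ w i, (i : ℕ) ≤ (ofLex x.1).1 ∧ (i : ℕ) ≤ (ofLex x.2).1) ∧
       (∑ i, (w i).map Prod.fst) = alphabetMultiset ℓ ν ∧
       (∑ i, (w i).map Prod.snd) = alphabetMultiset ℓ μ}

/-- The content multiset of a composition over the alphabet `ℕ` (0-indexed letters). -/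
def natContent (c : List ℕ) : Multiset ℕ := contentMultiset c id

/-- Classical semistandard Young tableaux of shape `lam` and content `μ`,
with entries in `ℕ` (0-indexed letters). -/
def SSTclassical (lam μ : List ℕ) : Set (ℕ → ℕ → ℕ) :=
  {T | IsSSYT lam 0 T ∧ entries lam T = natContent μ}

/-- Extend an `m × m` block ℕ-matrix to an `(m+1) × (m+1)` one by zero blocks. -/
def extendBlock (m : ℕ) (A : Fin m → Fin m → ((ℕ × ℕ) →₀ ℕ)) :
    Fin (m + 1) → Fin (m + 1) → ((ℕ × ℕ) →₀ ℕ) :=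
  fun p q => if h : (p : ℕ) < m ∧ (q : ℕ) < m then A ⟨(p : ℕ), h.1⟩ ⟨(q : ℕ), h.2⟩ else 0

/-- Extend an `m × m` family of partitions by empty partitions. -/
def extendPart (m : ℕ) (P : Fin m → Fin m → ℕ → ℕ → List ℕ) :
    Fin (m + 1) → Fin (m + 1) → ℕ → ℕ → List ℕ :=
  fun p q =>
    if h : (p : ℕ) < m ∧ (q : ℕ) < m then P ⟨(p : ℕ), h.1⟩ ⟨(q : ℕ), h.2⟩
    else fun _ _ => []

/-- Extend an `(m)`-multitableau by the empty tableau. -/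
def extendTab (m : ℕ) (T : Fin m → ℕ → ℕ → Letter) : Fin (m + 1) → ℕ → ℕ → Letter :=
  fun i => if h : (i : ℕ) < m then T ⟨(i : ℕ), h⟩ else fun _ _ => toLex (0, 0)

/-- Extend an `m`-tuple of biwords by the empty biword. -/
def extendBW (m : ℕ) (w : Fin m → Multiset (Letter × Letter)) :
    Fin (m + 1) → Multiset (Letter × Letter) :=
  fun i => if h : (i : ℕ) < m then w ⟨(i : ℕ), h⟩ else 0

/-!
Both equalities come from explicit bijections. A composition `c` without trailing zeros and
with at most `m + 1` parts amounts to its size `a = |c|` together with the partition `η` of its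
tail sums `η_k = c_{k+1} + c_{k+2} + ⋯`, which has at most `m` parts, all `≤ a`; applied
entrywise, this identifies `BCM_ℓ(ν,μ)` with `ParMat♭_{ν,μ}`. A tuple of biwords is determined
by the multiplicities of the biletters `(i_p, j_q)` in its `k`-th biword; recording them as the
parts of the composition at position `(p,q,i,j)` turns the flagging condition `k ≤ min(p,q)`
into the length bound on that composition, and the top and bottom contents into the row and
column sums.
-/

def trimZeros (l : List ℕ) : List ℕ := l.rdropWhile (· == 0)

lemma noTrailingZero_trimZeros (l : List ℕ) : NoTrailingZero (trimZeros l) := fun h => by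
  simpa [trimZeros] using List.rdropWhile_last_not _ l h

lemma trimZeros_eq_nil_iff {l : List ℕ} : trimZeros l = [] ↔ ∀ x ∈ l, x = 0 := by
  simp [trimZeros, List.rdropWhile_eq_nil_iff]

lemma length_trimZeros_le (l : List ℕ) : (trimZeros l).length ≤ l.length :=
  (List.rdropWhile_prefix _ l).length_le

lemma getD_eq_zero_of_forall_eq_zero {l : List ℕ} (h : ∀ x ∈ l, x = 0) (k : ℕ) :
    l.getD k 0 = 0 := by
  rcases lt_or_ge k l.length with hk | hk
  · rw [List.getD_eq_getElem _ _ hk]; exact h _ (List.getElem_mem hk)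
  · exact List.getD_eq_default _ _ hk

lemma trimZeros_append_zeros (l : List ℕ) :
    ∃ z, (∀ x ∈ z, x = 0) ∧ trimZeros l ++ z = l :=
  ⟨_, fun _ hx => by simpa using List.mem_rtakeWhile_imp hx, List.rdropWhile_append_rtakeWhile⟩

lemma getD_trimZeros (l : List ℕ) (k : ℕ) : (trimZeros l).getD k 0 = l.getD k 0 := by
  obtain ⟨z, hz, hl⟩ := trimZeros_append_zeros l
  conv_rhs => rw [← hl]
  rcases lt_or_ge k (trimZeros l).length with hk | hk
  · rw [List.getD_append _ _ _ _ hk]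
  · rw [List.getD_append_right _ _ _ _ hk, List.getD_eq_default _ _ hk,
      getD_eq_zero_of_forall_eq_zero hz]

lemma sum_trimZeros (l : List ℕ) : (trimZeros l).sum = l.sum := by
  obtain ⟨z, hz, hl⟩ := trimZeros_append_zeros l
  conv_rhs => rw [← hl]
  rw [List.sum_append, List.sum_eq_zero hz, add_zero]

lemma getD_ofFn {n : ℕ} (f : Fin n → ℕ) (k : ℕ) :
    (List.ofFn f).getD k 0 = if h : k < n then f ⟨k, h⟩ else 0 := by
  simp only [List.getD_eq_getElem?_getD, List.getElem?_ofFn]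
  split_ifs <;> rfl

lemma NoTrailingZero.length_le_iff {l : List ℕ} (hl : NoTrailingZero l) {m : ℕ} :
    l.length ≤ m ↔ ∀ k, m ≤ k → l.getD k 0 = 0 := by
  refine ⟨fun h k hk => List.getD_eq_default _ _ (h.trans hk), fun h => ?_⟩
  by_contra! hm
  have hne : l ≠ [] := List.ne_nil_of_length_pos (by omega)
  apply hl hne
  rw [List.getLast_eq_getElem, ← List.getD_eq_getElem _ 0]
  exact h _ (by omega)

lemma NoTrailingZero.ext_getD {l₁ l₂ : List ℕ} (h₁ : NoTrailingZero l₁) (h₂ : NoTrailingZero l₂)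
    (h : ∀ k, l₁.getD k 0 = l₂.getD k 0) : l₁ = l₂ := by
  have hlen : l₁.length = l₂.length := le_antisymm
    ((h₁.length_le_iff).2 fun k hk => (h k).trans (List.getD_eq_default _ _ hk))
    ((h₂.length_le_iff).2 fun k hk => (h k).symm.trans (List.getD_eq_default _ _ hk))
  refine List.ext_getElem hlen fun k hk₁ hk₂ => ?_
  simpa only [List.getD_eq_getElem _ _ hk₁, List.getD_eq_getElem _ _ hk₂] using h k

lemma IsPartitionList.noTrailingZero {η : List ℕ} (hη : IsPartitionList η) :
    NoTrailingZero η :=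
  fun h => (hη.2 _ (List.getLast_mem h)).ne'

lemma getD_succ_le_of_pairwise_ge {l : List ℕ} (hl : l.Pairwise (· ≥ ·)) (k : ℕ) :
    l.getD (k + 1) 0 ≤ l.getD k 0 := by
  rcases lt_or_ge (k + 1) l.length with hk | hk
  · rw [List.getD_eq_getElem _ _ hk, List.getD_eq_getElem _ _ (by omega)]
    exact List.pairwise_iff_getElem.1 hl k (k + 1) (by omega) hk (by omega)
  · rw [List.getD_eq_default _ _ hk]; exact Nat.zero_le _

lemma sum_drop_eq_getD_add (c : List ℕ) (k : ℕ) :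
    (c.drop k).sum = c.getD k 0 + (c.drop (k + 1)).sum := by
  rcases lt_or_ge k c.length with hk | hk
  · rw [List.drop_eq_getElem_cons hk, List.sum_cons, List.getD_eq_getElem _ _ hk]
  · rw [List.drop_eq_nil_of_le hk, List.drop_eq_nil_of_le (by omega),
      List.getD_eq_default _ _ hk]; rfl

lemma NoTrailingZero.eq_nil_of_sum_eq_zero {l : List ℕ} (hl : NoTrailingZero l) (h : l.sum = 0) :
    l = [] :=
  hl.ext_getD (fun h => absurd rfl h) fun k => by
    rw [getD_eq_zero_of_forall_eq_zero (List.sum_eq_zero_iff.1 h)]; rfl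

def tailSums (c : List ℕ) : List ℕ :=
  List.ofFn fun k : Fin (c.length - 1) => (c.drop (k + 1)).sum

/-- Inverse of `tailSums`: the parts are the differences `h_k - h_{k+1}` of `h = a :: η`. -/
def ofTailSums (a : ℕ) (η : List ℕ) : List ℕ :=
  trimZeros (List.ofFn fun k : Fin (η.length + 1) => (a :: η).getD k 0 - η.getD k 0)

lemma length_tailSums (c : List ℕ) : (tailSums c).length = c.length - 1 := by
  simp [tailSums]

lemma getD_tailSums (c : List ℕ) (k : ℕ) : (tailSums c).getD k 0 = (c.drop (k + 1)).sum := by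
  rw [tailSums, getD_ofFn]
  split_ifs with hk
  · rfl
  · rw [List.drop_eq_nil_of_le (by omega), List.sum_nil]

lemma getD_cons_sum_tailSums (c : List ℕ) (k : ℕ) :
    (c.sum :: tailSums c).getD k 0 = (c.drop k).sum := by
  cases k with
  | zero => rfl
  | succ k => exact getD_tailSums c k

lemma isPartitionList_tailSums {c : List ℕ} (hc : NoTrailingZero c) :
    IsPartitionList (tailSums c) := by
  refine ⟨List.pairwise_ofFn.2 fun i j hij =>
    ((c.drop_sublist_drop_left (by omega)).sum_le_sum fun _ _ => Nat.zero_le _), ?_⟩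
  simp only [tailSums, List.mem_ofFn, forall_exists_index]
  rintro _ k rfl
  have hne : c.drop (k + 1) ≠ [] := by simp; omega
  calc 0 < (c.drop (k + 1)).getLast hne := by
        rw [List.getLast_drop]; exact Nat.pos_of_ne_zero (hc _)
    _ ≤ (c.drop (k + 1)).sum := List.le_sum_of_mem (List.getLast_mem hne)

lemma le_sum_of_mem_tailSums {c : List ℕ} {x : ℕ} (hx : x ∈ tailSums c) : x ≤ c.sum := by
  simp only [tailSums, List.mem_ofFn] at hx
  obtain ⟨k, rfl⟩ := hx
  exact (List.drop_sublist _ _).sum_le_sum fun _ _ => Nat.zero_le _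

lemma noTrailingZero_ofTailSums (a : ℕ) (η : List ℕ) : NoTrailingZero (ofTailSums a η) :=
  noTrailingZero_trimZeros _

lemma length_ofTailSums_le (a : ℕ) (η : List ℕ) : (ofTailSums a η).length ≤ η.length + 1 :=
  (length_trimZeros_le _).trans (List.length_ofFn ..).le

lemma getD_ofTailSums (a : ℕ) (η : List ℕ) (k : ℕ) :
    (ofTailSums a η).getD k 0 = (a :: η).getD k 0 - η.getD k 0 := by
  rw [ofTailSums, getD_trimZeros, getD_ofFn]
  split_ifs with hk
  · rfl
  · rw [List.getD_eq_default _ _ (by simp; omega), List.getD_eq_default _ _ (by omega)]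

/-- The differences telescope because `a :: η` is weakly decreasing, so none of the truncated
subtractions in `ofTailSums` cuts off. -/
lemma sum_drop_ofTailSums {a : ℕ} {η : List ℕ} (hη : IsPartitionList η) (ha : ∀ x ∈ η, x ≤ a)
    (k : ℕ) : ((ofTailSums a η).drop k).sum = (a :: η).getD k 0 := by
  have hdec : (a :: η).Pairwise (· ≥ ·) := List.pairwise_cons.2 ⟨ha, hη.1⟩
  have hlarge : ∀ k, η.length + 1 ≤ k → ((ofTailSums a η).drop k).sum = (a :: η).getD k 0 :=
    fun k hk => by
      rw [List.drop_eq_nil_of_le ((length_ofTailSums_le a η).trans hk),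
        List.getD_eq_default _ _ (by simpa using hk), List.sum_nil]
  obtain hk | hk := le_or_gt (η.length + 1) k
  · exact hlarge k hk
  replace hk := hk.le
  induction hk using Nat.decreasingInduction with
  | self => exact hlarge _ le_rfl
  | of_succ k _ ih =>
    rw [sum_drop_eq_getD_add, getD_ofTailSums, ih]
    have := getD_succ_le_of_pairwise_ge hdec k
    simp only [List.getD_cons_succ] at this ⊢
    omega

lemma sum_ofTailSums {a : ℕ} {η : List ℕ} (hη : IsPartitionList η) (ha : ∀ x ∈ η, x ≤ a) :
    (ofTailSums a η).sum = a :=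
  sum_drop_ofTailSums hη ha 0

lemma tailSums_ofTailSums {a : ℕ} {η : List ℕ} (hη : IsPartitionList η) (ha : ∀ x ∈ η, x ≤ a) :
    tailSums (ofTailSums a η) = η :=
  (isPartitionList_tailSums (noTrailingZero_ofTailSums a η)).noTrailingZero.ext_getD
    hη.noTrailingZero fun k => by rw [getD_tailSums, sum_drop_ofTailSums hη ha]; rfl

lemma ofTailSums_tailSums {c : List ℕ} (hc : NoTrailingZero c) :
    ofTailSums c.sum (tailSums c) = c :=
  (noTrailingZero_ofTailSums _ _).ext_getD hc fun k => by
    rw [getD_ofTailSums, getD_cons_sum_tailSums, getD_tailSums, sum_drop_eq_getD_add,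
      Nat.add_sub_cancel]

lemma finsum_ite_fst_eq {α β : Type*} [DecidableEq α] (f : α × β → ℕ) (hf : f.HasFiniteSupport)
    (a : α) : ∑ᶠ x, (if x.1 = a then f x else 0) = ∑ᶠ b, f (a, b) := by
  have hsupp : (fun x => if x.1 = a then f x else 0).HasFiniteSupport :=
    hf.subset fun x hx => by contrapose! hx; simp [Function.notMem_support.1 hx]
  rw [finsum_curry _ hsupp, finsum_eq_single _ a fun i hi => by simp [hi]]
  simp

lemma finsum_ite_snd_eq {α β : Type*} [DecidableEq β] (f : α × β → ℕ) (hf : f.HasFiniteSupport)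
    (b : β) : ∑ᶠ x, (if x.2 = b then f x else 0) = ∑ᶠ a, f (a, b) := by
  rw [← finsum_comp_equiv (Equiv.prodComm β α)]
  exact finsum_ite_fst_eq (f ∘ Prod.swap) (hf.comp_of_injective Prod.swap_injective) b

lemma rowSum_eq_finsum (M : (ℕ × ℕ) →₀ ℕ) (t : ℕ) : rowSum M t = ∑ᶠ j, M (t, j) := by
  rw [rowSum, ← finsum_ite_fst_eq _ M.hasFiniteSupport, eq_comm]
  exact finsum_eq_sum_of_support_subset _ fun x hx => by contrapose! hx; simp_all

lemma colSum_eq_finsum (M : (ℕ × ℕ) →₀ ℕ) (t : ℕ) : colSum M t = ∑ᶠ i, M (i, t) := by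
  rw [colSum, ← finsum_ite_snd_eq _ M.hasFiniteSupport, eq_comm]
  exact finsum_eq_sum_of_support_subset _ fun x hx => by contrapose! hx; simp_all

section BCMParMat

variable {ℓ : ℕ} {ν μ : Fin ℓ → List ℕ}

noncomputable def sizeMatrix (B : Fin ℓ → Fin ℓ → ℕ → ℕ → List ℕ)
    (hfin : ∀ p q, {x : ℕ × ℕ | B p q x.1 x.2 ≠ []}.Finite) (p q : Fin ℓ) : (ℕ × ℕ) →₀ ℕ :=
  Finsupp.ofSupportFinite (fun x => (B p q x.1 x.2).sum)
    ((hfin p q).subset fun x hx hnil => hx (by simp [hnil]))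

lemma sizeMatrix_tailSums_mem_parMat {B : Fin ℓ → Fin ℓ → ℕ → ℕ → List ℕ}
    (hB : B ∈ BCM ℓ ν μ) :
    (sizeMatrix B hB.1, fun p q i j => tailSums (B p q i j)) ∈ ParMat ℓ ν μ := by
  obtain ⟨-, hntz, hlen, hrow, hcol⟩ := hB
  refine ⟨fun s t => ?_, fun s t => ?_, fun p q i j => isPartitionList_tailSums (hntz p q i j),
    fun p q i j x hx => le_sum_of_mem_tailSums hx, fun p q i j => ?_⟩
  · simp only [rowSum_eq_finsum, ← hrow s t]; rfl
  · simp only [colSum_eq_finsum, ← hcol s t]; rfl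
  · have := hlen p q i j
    simp only [length_tailSums]
    omega

lemma ofTailSums_mem_bcm
    {AP : (Fin ℓ → Fin ℓ → ((ℕ × ℕ) →₀ ℕ)) × (Fin ℓ → Fin ℓ → ℕ → ℕ → List ℕ)}
    (hAP : AP ∈ ParMat ℓ ν μ) :
    (fun p q i j => ofTailSums (AP.1 p q (i, j)) (AP.2 p q i j)) ∈ BCM ℓ ν μ := by
  obtain ⟨hrow, hcol, hpart, hle, hlen⟩ := hAP
  have hsum p q i j : (ofTailSums (AP.1 p q (i, j)) (AP.2 p q i j)).sum = AP.1 p q (i, j) :=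
    sum_ofTailSums (hpart p q i j) (hle p q i j)
  refine ⟨fun p q => (AP.1 p q).hasFiniteSupport.subset fun x hx => ?_,
    fun p q i j => noTrailingZero_ofTailSums _ _,
    fun p q i j => (length_ofTailSums_le _ _).trans (by have := hlen p q i j; omega),
    fun s t => ?_, fun s t => ?_⟩
  · exact fun h0 => hx ((noTrailingZero_ofTailSums _ _).eq_nil_of_sum_eq_zero
      ((hsum p q x.1 x.2).trans h0))
  · simp only [hsum, ← hrow s t, rowSum_eq_finsum]
  · simp only [hsum, ← hcol s t, colSum_eq_finsum]

variable (ℓ ν μ) in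
noncomputable def bcmEquivParMat : BCM ℓ ν μ ≃ ParMat ℓ ν μ where
  toFun B := ⟨_, sizeMatrix_tailSums_mem_parMat B.2⟩
  invFun AP := ⟨_, ofTailSums_mem_bcm AP.2⟩
  left_inv B := Subtype.ext <| by
    funext p q i j
    exact ofTailSums_tailSums (B.2.2.1 p q i j)
  right_inv AP := by
    obtain ⟨-, -, hpart, hle, -⟩ := AP.2
    refine Subtype.ext (Prod.ext ?_ ?_)
    · funext p q
      exact Finsupp.ext fun x => sum_ofTailSums (hpart p q x.1 x.2) (hle p q x.1 x.2)
    · funext p q i j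
      exact tailSums_ofTailSums (hpart p q i j) (hle p q i j)

end BCMParMat

lemma Multiset.hasFiniteSupport_count_comp {α β : Type*} [DecidableEq α] (m : Multiset α)
    {f : β → α} (hf : f.Injective) : (fun b => m.count (f b)).HasFiniteSupport :=
  m.toFinset.finite_toSet.preimage hf.injOn |>.subset
    fun b hb => by simpa using Multiset.count_ne_zero.1 hb

lemma Multiset.count_map_fst_eq_finsum {α β : Type*} [DecidableEq α] [DecidableEq β]
    (m : Multiset (α × β)) (a : α) : (m.map Prod.fst).count a = ∑ᶠ b, m.count (a, b) := by
  induction m using Multiset.induction_on with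
  | empty => simp
  | cons z m ih =>
    have hz : (fun b => if (a, b) = z then 1 else 0).HasFiniteSupport :=
      (Set.finite_singleton z.2).subset fun b hb => by
        by_contra h; exact hb (if_neg fun h' => h (by simp [← h']))
    simp only [Multiset.map_cons, Multiset.count_cons, ih,
      finsum_add_distrib (m.hasFiniteSupport_count_comp (Prod.mk_right_injective a)) hz]
    rw [finsum_eq_single _ z.2 fun b hb => if_neg fun h => hb (by simp [← h])]
    simp [Prod.ext_iff]

lemma count_contentMultiset {α : Type*} [DecidableEq α] {f : ℕ → α} (hf : f.Injective)
    (c : List ℕ) (a : ℕ) : (contentMultiset c f).count (f a) = c.getD a 0 := by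
  rw [contentMultiset, Multiset.count_bind]
  simp only [Multiset.count_replicate, hf.eq_iff]
  change ∑ x ∈ Finset.range c.length, _ = _
  rw [Finset.sum_ite_eq']
  split_ifs with ha
  · rfl
  · exact (List.getD_eq_default _ _ (by simpa using ha)).symm

lemma exists_eq_of_mem_contentMultiset {α : Type*} {f : ℕ → α} {c : List ℕ} {y : α}
    (hy : y ∈ contentMultiset c f) : ∃ a, f a = y := by
  obtain ⟨a, -, ha⟩ := Multiset.mem_bind.1 hy
  exact ⟨a, (Multiset.eq_of_mem_replicate ha).symm⟩

section Letters

variable {ℓ : ℕ}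

lemma count_alphabetMultiset (ν : Fin ℓ → List ℕ) (s : Fin ℓ) (t : ℕ) :
    (alphabetMultiset ℓ ν).count (toLex ((s : ℕ), t)) = (ν s).getD t 0 := by
  rw [alphabetMultiset, Multiset.count_sum', Finset.sum_eq_single s]
  · exact count_contentMultiset (fun a b h => (Prod.mk.inj (toLex.injective h)).2) _ _
  · intro b _ hb
    refine Multiset.count_eq_zero.2 fun hmem => hb ?_
    obtain ⟨a, ha⟩ := exists_eq_of_mem_contentMultiset hmem
    simp only [toLex_inj, Prod.mk.injEq] at ha
    exact Fin.ext ha.1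
  · simp

lemma block_lt_of_mem_alphabetMultiset {ν : Fin ℓ → List ℕ} {y : Letter}
    (hy : y ∈ alphabetMultiset ℓ ν) : (ofLex y).1 < ℓ := by
  obtain ⟨b, -, hb⟩ := Multiset.mem_sum.1 hy
  obtain ⟨a, rfl⟩ := exists_eq_of_mem_contentMultiset hb
  exact b.2

lemma eq_of_count_toLex_eq {m₁ m₂ : Multiset Letter} (h₁ : ∀ y ∈ m₁, (ofLex y).1 < ℓ)
    (h₂ : ∀ y ∈ m₂, (ofLex y).1 < ℓ)
    (h : ∀ (s : Fin ℓ) (t : ℕ), m₁.count (toLex ((s : ℕ), t)) = m₂.count (toLex ((s : ℕ), t))) :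
    m₁ = m₂ := by
  refine Multiset.ext' fun y => ?_
  by_cases hy : (ofLex y).1 < ℓ
  · simpa using h ⟨_, hy⟩ (ofLex y).2
  · rw [Multiset.count_eq_zero.2 fun hm => hy (h₁ y hm),
      Multiset.count_eq_zero.2 fun hm => hy (h₂ y hm)]

lemma finsum_letter_eq_sum_finsum (g : Letter → ℕ) (hg : g.HasFiniteSupport)
    (hℓ : ∀ y, g y ≠ 0 → (ofLex y).1 < ℓ) :
    ∑ᶠ y, g y = ∑ q : Fin ℓ, ∑ᶠ j, g (toLex ((q : ℕ), j)) := by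
  rw [← finsum_comp_equiv toLex,
    finsum_curry (fun x => g (toLex x)) (hg.comp_of_injective toLex.injective),
    finsum_eq_sum_of_support_subset _ (s := Finset.range ℓ), Finset.sum_range]
  intro q hq
  by_contra hqℓ
  exact hq (finsum_eq_zero_of_forall_eq_zero fun j =>
    by_contra fun hj => hqℓ (by simpa using hℓ _ hj))

end Letters

section Biwords

variable {ℓ : ℕ} {ν μ : Fin ℓ → List ℕ}

def biletter (p q : Fin ℓ) (i j : ℕ) : Letter × Letter :=
  (toLex ((p : ℕ), i), toLex ((q : ℕ), j))

lemma biletter_injective (p q : Fin ℓ) :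
    Function.Injective fun x : ℕ × ℕ => biletter p q x.1 x.2 :=
  fun x y h => by simpa [biletter, Prod.ext_iff] using h

lemma exists_eq_biletter {z : Letter × Letter} (hz : (ofLex z.1).1 < ℓ ∧ (ofLex z.2).1 < ℓ) :
    ∃ (p q : Fin ℓ) (i j : ℕ), z = biletter p q i j :=
  ⟨⟨_, hz.1⟩, ⟨_, hz.2⟩, (ofLex z.1).2, (ofLex z.2).2, by simp [biletter]⟩

def bwToBcm (w : Fin ℓ → Multiset (Letter × Letter)) (p q : Fin ℓ) (i j : ℕ) : List ℕ :=
  trimZeros (List.ofFn fun k => (w k).count (biletter p q i j))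

lemma noTrailingZero_bwToBcm (w : Fin ℓ → Multiset (Letter × Letter)) (p q : Fin ℓ) (i j : ℕ) :
    NoTrailingZero (bwToBcm w p q i j) :=
  noTrailingZero_trimZeros _

lemma getD_bwToBcm (w : Fin ℓ → Multiset (Letter × Letter)) (p q : Fin ℓ) (i j : ℕ)
    (k : Fin ℓ) : (bwToBcm w p q i j).getD k 0 = (w k).count (biletter p q i j) := by
  rw [bwToBcm, getD_trimZeros, getD_ofFn, dif_pos k.2]

lemma length_bwToBcm_le (w : Fin ℓ → Multiset (Letter × Letter)) (p q : Fin ℓ) (i j : ℕ) :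
    (bwToBcm w p q i j).length ≤ ℓ :=
  (length_trimZeros_le _).trans (List.length_ofFn ..).le

lemma sum_bwToBcm (w : Fin ℓ → Multiset (Letter × Letter)) (p q : Fin ℓ) (i j : ℕ) :
    (bwToBcm w p q i j).sum = ∑ k, (w k).count (biletter p q i j) := by
  rw [bwToBcm, sum_trimZeros, List.sum_ofFn]

lemma bwToBcm_map_swap (w : Fin ℓ → Multiset (Letter × Letter)) (p q : Fin ℓ) (i j : ℕ) :
    bwToBcm (fun k => (w k).map Prod.swap) p q i j = bwToBcm w q p j i := by
  simp only [bwToBcm]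
  congr 2
  funext k
  exact Multiset.count_map_eq_count' _ _ Prod.swap_injective (biletter q p j i)

lemma sum_finsum_sum_bwToBcm_row {w : Fin ℓ → Multiset (Letter × Letter)}
    (hw : ∀ k, ∀ z ∈ w k, (ofLex z.2).1 < ℓ) (s : Fin ℓ) (t : ℕ) :
    ∑ q, ∑ᶠ j, (bwToBcm w s q t j).sum =
      (∑ k, (w k).map Prod.fst).count (toLex ((s : ℕ), t)) := by
  simp only [sum_bwToBcm, Multiset.count_sum', Multiset.count_map_fst_eq_finsum]
  rw [Finset.sum_congr rfl fun k _ => finsum_letter_eq_sum_finsum _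
    ((w k).hasFiniteSupport_count_comp (Prod.mk_right_injective _))
    fun y hy => hw k _ (Multiset.count_ne_zero.1 hy), Finset.sum_comm]
  exact Finset.sum_congr rfl fun q _ => finsum_sum_comm _ _ fun k _ =>
    (w k).hasFiniteSupport_count_comp fun j j' h => by simpa [biletter] using h

lemma sum_finsum_sum_bwToBcm_col {w : Fin ℓ → Multiset (Letter × Letter)}
    (hw : ∀ k, ∀ z ∈ w k, (ofLex z.1).1 < ℓ) (s : Fin ℓ) (t : ℕ) :
    ∑ p, ∑ᶠ i, (bwToBcm w p s i t).sum =
      (∑ k, (w k).map Prod.snd).count (toLex ((s : ℕ), t)) := by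
  have := sum_finsum_sum_bwToBcm_row (w := fun k => (w k).map Prod.swap)
    (fun k _ hz => by obtain ⟨z, hz', rfl⟩ := Multiset.mem_map.1 hz; exact hw k z hz') s t
  simpa only [bwToBcm_map_swap, Multiset.map_map, Function.comp_def, Prod.fst_swap] using this

lemma block_lt_of_mem_bw {w : Fin ℓ → Multiset (Letter × Letter)} (hw : w ∈ BW ℓ ν μ) {k : Fin ℓ}
    {z : Letter × Letter} (hz : z ∈ w k) : (ofLex z.1).1 < ℓ ∧ (ofLex z.2).1 < ℓ := by
  have hmem {f : Letter × Letter → Letter} : f z ∈ ∑ k, (w k).map f :=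
    Multiset.mem_sum.2 ⟨k, Finset.mem_univ _, Multiset.mem_map_of_mem _ hz⟩
  exact ⟨block_lt_of_mem_alphabetMultiset (hw.2.1 ▸ hmem),
    block_lt_of_mem_alphabetMultiset (hw.2.2 ▸ hmem)⟩

lemma bwToBcm_mem_bcm {w : Fin ℓ → Multiset (Letter × Letter)} (hw : w ∈ BW ℓ ν μ) :
    bwToBcm w ∈ BCM ℓ ν μ := by
  refine ⟨fun p q => ?_, noTrailingZero_bwToBcm w, fun p q i j => ?_,
    fun s t => ?_, fun s t => ?_⟩
  · refine (Set.finite_iUnion fun k => (w k).toFinset.finite_toSet.preimage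
      (biletter_injective p q).injOn).subset fun x hx => ?_
    simp only [Set.mem_iUnion, Set.mem_preimage, Finset.mem_coe, Multiset.mem_toFinset]
    by_contra! h
    exact hx (trimZeros_eq_nil_iff.2 (by simpa [List.mem_ofFn] using h))
  · refine (noTrailingZero_bwToBcm w p q i j).length_le_iff.2 fun k hk => ?_
    by_cases hkℓ : k < ℓ
    · rw [getD_bwToBcm w p q i j ⟨k, hkℓ⟩, Multiset.count_eq_zero]
      intro hmem
      have := hw.1 _ _ hmem
      simp only [biletter, ofLex_toLex] at this
      omega
    · exact List.getD_eq_default _ _ ((length_bwToBcm_le w p q i j).trans (not_lt.1 hkℓ))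
  · rw [sum_finsum_sum_bwToBcm_row fun k z hz => (block_lt_of_mem_bw hw hz).2, hw.2.1,
      count_alphabetMultiset]
  · rw [sum_finsum_sum_bwToBcm_col fun k z hz => (block_lt_of_mem_bw hw hz).1, hw.2.2,
      count_alphabetMultiset]

def blockCount (B : Fin ℓ → Fin ℓ → ℕ → ℕ → List ℕ) (k : ℕ) (z : Letter × Letter) : ℕ :=
  if h : (ofLex z.1).1 < ℓ ∧ (ofLex z.2).1 < ℓ then
    (B ⟨_, h.1⟩ ⟨_, h.2⟩ (ofLex z.1).2 (ofLex z.2).2).getD k 0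
  else 0

lemma blockCount_biletter (B : Fin ℓ → Fin ℓ → ℕ → ℕ → List ℕ) (k : ℕ) (p q : Fin ℓ)
    (i j : ℕ) : blockCount B k (biletter p q i j) = (B p q i j).getD k 0 := by
  simp [blockCount, biletter]

lemma exists_biletter_of_blockCount_ne_zero {B : Fin ℓ → Fin ℓ → ℕ → ℕ → List ℕ} {k : ℕ}
    {z : Letter × Letter} (h : blockCount B k z ≠ 0) :
    ∃ p q i j, z = biletter p q i j ∧ (B p q i j).getD k 0 ≠ 0 := by
  have hz : (ofLex z.1).1 < ℓ ∧ (ofLex z.2).1 < ℓ := by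
    by_contra hz; exact h (dif_neg hz)
  obtain ⟨p, q, i, j, rfl⟩ := exists_eq_biletter hz
  exact ⟨p, q, i, j, rfl, by rwa [blockCount_biletter] at h⟩

lemma hasFiniteSupport_blockCount {B : Fin ℓ → Fin ℓ → ℕ → ℕ → List ℕ}
    (hfin : ∀ p q, {x : ℕ × ℕ | B p q x.1 x.2 ≠ []}.Finite) (k : ℕ) :
    (blockCount B k).HasFiniteSupport := by
  refine (Set.finite_iUnion fun p => Set.finite_iUnion fun q =>
    (hfin p q).image fun x => biletter p q x.1 x.2).subset fun z hz => ?_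
  obtain ⟨p, q, i, j, rfl, h⟩ := exists_biletter_of_blockCount_ne_zero hz
  simp only [Set.mem_iUnion, Set.mem_image]
  exact ⟨p, q, (i, j), fun hnil => h (by simp [hnil]), rfl⟩

noncomputable def bcmToBw (B : Fin ℓ → Fin ℓ → ℕ → ℕ → List ℕ)
    (hfin : ∀ p q, {x : ℕ × ℕ | B p q x.1 x.2 ≠ []}.Finite) (k : Fin ℓ) :
    Multiset (Letter × Letter) :=
  Finsupp.toMultiset (Finsupp.ofSupportFinite _ (hasFiniteSupport_blockCount hfin k))

lemma count_bcmToBw {B : Fin ℓ → Fin ℓ → ℕ → ℕ → List ℕ}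
    (hfin : ∀ p q, {x : ℕ × ℕ | B p q x.1 x.2 ≠ []}.Finite) (k : Fin ℓ) (z : Letter × Letter) :
    (bcmToBw B hfin k).count z = blockCount B k z := by
  rw [bcmToBw, Finsupp.count_toMultiset]
  rfl

lemma bwToBcm_bcmToBw {B : Fin ℓ → Fin ℓ → ℕ → ℕ → List ℕ} (hB : B ∈ BCM ℓ ν μ) :
    bwToBcm (bcmToBw B hB.1) = B := by
  funext p q i j
  refine (noTrailingZero_bwToBcm _ p q i j).ext_getD (hB.2.1 p q i j) fun k => ?_
  by_cases hk : k < ℓ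
  · exact (getD_bwToBcm _ p q i j ⟨k, hk⟩).trans (by rw [count_bcmToBw, blockCount_biletter])
  · have := hB.2.2.1 p q i j
    rw [List.getD_eq_default _ _ ((length_bwToBcm_le _ p q i j).trans (not_lt.1 hk)),
      List.getD_eq_default _ _ (by omega)]

lemma bcmToBw_bwToBcm {w : Fin ℓ → Multiset (Letter × Letter)} (hw : w ∈ BW ℓ ν μ)
    (hfin : ∀ p q, {x : ℕ × ℕ | bwToBcm w p q x.1 x.2 ≠ []}.Finite) :
    bcmToBw (bwToBcm w) hfin = w := by
  funext k
  refine Multiset.ext' fun z => ?_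
  rw [count_bcmToBw]
  by_cases hz : (ofLex z.1).1 < ℓ ∧ (ofLex z.2).1 < ℓ
  · obtain ⟨p, q, i, j, rfl⟩ := exists_eq_biletter hz
    rw [blockCount_biletter, getD_bwToBcm]
  · rw [blockCount, dif_neg hz, eq_comm, Multiset.count_eq_zero]
    exact fun hmem => hz (block_lt_of_mem_bw hw hmem)

lemma bcmToBw_mem_bw {B : Fin ℓ → Fin ℓ → ℕ → ℕ → List ℕ} (hB : B ∈ BCM ℓ ν μ) :
    bcmToBw B hB.1 ∈ BW ℓ ν μ := by
  have hmem {k : Fin ℓ} {z : Letter × Letter} (hz : z ∈ bcmToBw B hB.1 k) :=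
    exists_biletter_of_blockCount_ne_zero (by rwa [← count_bcmToBw, Multiset.count_ne_zero])
  have hblock k z (hz : z ∈ bcmToBw B hB.1 k) : (ofLex z.1).1 < ℓ ∧ (ofLex z.2).1 < ℓ := by
    obtain ⟨p, q, i, j, rfl, -⟩ := hmem hz
    exact ⟨p.2, q.2⟩
  have hblock_sum {f : Letter × Letter → Letter}
      (hf : ∀ z, (ofLex z.1).1 < ℓ ∧ (ofLex z.2).1 < ℓ → (ofLex (f z)).1 < ℓ) :
      ∀ y ∈ ∑ k, (bcmToBw B hB.1 k).map f, (ofLex y).1 < ℓ := fun y hy => by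
    obtain ⟨k, -, hk⟩ := Multiset.mem_sum.1 hy
    obtain ⟨z, hz, rfl⟩ := Multiset.mem_map.1 hk
    exact hf z (hblock k z hz)
  refine ⟨fun k z hz => ?_, ?_, ?_⟩
  · obtain ⟨p, q, i, j, rfl, hk⟩ := hmem hz
    have hlt : (k : ℕ) < (B p q i j).length := by
      by_contra h; exact hk (List.getD_eq_default _ _ (not_lt.1 h))
    have := hB.2.2.1 p q i j
    simp only [biletter, ofLex_toLex]
    omega
  · refine eq_of_count_toLex_eq (hblock_sum fun z hz => hz.1)
      (fun y hy => block_lt_of_mem_alphabetMultiset hy) fun s t => ?_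
    rw [← sum_finsum_sum_bwToBcm_row (fun k z hz => (hblock k z hz).2), bwToBcm_bcmToBw hB,
      hB.2.2.2.1, count_alphabetMultiset]
  · refine eq_of_count_toLex_eq (hblock_sum fun z hz => hz.2)
      (fun y hy => block_lt_of_mem_alphabetMultiset hy) fun s t => ?_
    rw [← sum_finsum_sum_bwToBcm_col (fun k z hz => (hblock k z hz).1), bwToBcm_bcmToBw hB,
      hB.2.2.2.2, count_alphabetMultiset]

variable (ℓ ν μ) in
noncomputable def bwEquivBcm : BW ℓ ν μ ≃ BCM ℓ ν μ where
  toFun w := ⟨_, bwToBcm_mem_bcm w.2⟩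
  invFun B := ⟨_, bcmToBw_mem_bw B.2⟩
  left_inv w := Subtype.ext (bcmToBw_bwToBcm w.2 (bwToBcm_mem_bcm w.2).1)
  right_inv B := Subtype.ext (bwToBcm_bcmToBw B.2)

end Biwords

theorem bcm_bw_parmat_card_general (ℓ : ℕ) (ν μ : Fin ℓ → List ℕ) :
    Nat.card ↥(BCM ℓ ν μ) = Nat.card ↥(BW ℓ ν μ) ∧
    Nat.card ↥(BW ℓ ν μ) = Nat.card ↥(ParMat ℓ ν μ) :=
  ⟨Nat.card_congr (bwEquivBcm ℓ ν μ).symm,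
    Nat.card_congr ((bwEquivBcm ℓ ν μ).trans (bcmEquivParMat ℓ ν μ))⟩

/-- The sets `BCM_ℓ(ν,μ)`, `BW_ℓ(ν,μ)` and `ParMat♭_{ν,μ}` all have the
same cardinality. -/
theorem bcm_bw_parmat_card (ℓ n : ℕ) (hℓ : 1 ≤ ℓ) (ν μ : Fin ℓ → List ℕ)
    (hν : IsMultiComp ℓ n ν) (hμ : IsMultiComp ℓ n μ) :
    Nat.card ↥(BCM ℓ ν μ) = Nat.card ↥(BW ℓ ν μ) ∧
    Nat.card ↥(BW ℓ ν μ) = Nat.card ↥(ParMat ℓ ν μ) :=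
  bcm_bw_parmat_card_general ℓ ν μ
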